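/- Let Γ ↷ (X, μ) be a strongly ergodic p.m.p. action of a countable group on a standard probability space and let ε > 0. Then there exist δ > 0 and a finite subset F ⊆ Γ such that for every standard Borel space Y and every Borel map ρ : X → Y satisfying μ({x ∈ X : ρ(gx) = ρ(x)}) ≥ 1 − δ for all g ∈ F, there exists y ∈ Y with μ({x ∈ X : ρ(x) = y}) ≥ 1 − ε. -/

import Mathlib

/-!
Suppose `ρ` is almost invariant under `F` but takes no value on a set of measure `≥ 1 - ε`,
and put `c = min ε (1/3)`. On a countably separated space, a probability measure for which
every measurable set has measure `< c` or co-measure `< c` has an atom of mass `≥ 1 - c`: as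
`3c ≤ 1`, the small sets are closed under finite, hence countable, unions, and taking the small
side of each member of a countable separating family leaves a subsingleton of co-measure `≤ c`.
Hence `ρ_* μ` splits along some Borel `B` into two pieces of mass `≥ c`, and `A = ρ⁻¹ B` is
an almost `F`-invariant set with `μ(A) μ(Aᶜ) ≥ c²`. Strong ergodicity, run along an
enumeration of `Γ`, yields `δ` and `F` for which no such set exists.
-/

open MeasureTheory Filter Topology Set
open scoped ENNReal

namespace IoanaPaper

/-- A p.m.p. action is strongly ergodic if every asymptotically invariant sequence of Borel
sets is trivial: `μ(g Aₙ Δ Aₙ) → 0` for all `g` implies `μ(Aₙ)(1 - μ(Aₙ)) → 0`. -/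
def StronglyErgodic {Γ X : Type*} [MeasurableSpace X] (μ : Measure X) (a : Γ → X → X) : Prop :=
  ∀ A : ℕ → Set X, (∀ n, MeasurableSet (A n)) →
    (∀ g : Γ, Tendsto (fun n => μ (symmDiff (a g '' A n) (A n))) atTop (𝓝 0)) →
    Tendsto (fun n => μ (A n) * μ (A n)ᶜ) atTop (𝓝 0)

section AlmostDirac

variable {Y : Type*} [MeasurableSpace Y] {ν : Measure Y} [IsProbabilityMeasure ν] {c : ℝ≥0∞}

theorem measure_union_lt_of_forall_lt_or_compl_lt (hc : 3 * c ≤ 1)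
    (h : ∀ B, MeasurableSet B → ν B < c ∨ ν Bᶜ < c) {B C : Set Y}
    (hB : MeasurableSet B) (hC : MeasurableSet C) (hBc : ν B < c) (hCc : ν C < c) :
    ν (B ∪ C) < c := by
  refine (h _ (hB.union hC)).resolve_right fun hcompl => ?_
  have : ν univ < 3 * c := calc
    ν univ ≤ ν (B ∪ C) + ν (B ∪ C)ᶜ := measure_univ_le_add_compl _
    _ ≤ ν B + ν C + ν (B ∪ C)ᶜ := by gcongr; exact measure_union_le B C
    _ < c + c + c := ENNReal.add_lt_add (ENNReal.add_lt_add hBc hCc) hcompl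
    _ = 3 * c := by ring
  exact (measure_univ (μ := ν) ▸ this).not_ge hc

theorem measure_iUnion_le_of_forall_lt_or_compl_lt (hc : 3 * c ≤ 1)
    (h : ∀ B, MeasurableSet B → ν B < c ∨ ν Bᶜ < c) {s : ℕ → Set Y}
    (hs : ∀ n, MeasurableSet (s n)) (hsc : ∀ n, ν (s n) < c) : ν (⋃ n, s n) ≤ c := by
  have hacc : ∀ n, MeasurableSet (accumulate s n) ∧ ν (accumulate s n) < c := by
    intro n
    induction n with
    | zero => simpa only [accumulate_zero_nat] using ⟨hs 0, hsc 0⟩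
    | succ n ih =>
      rw [accumulate_succ]
      exact ⟨ih.1.union (hs _), measure_union_lt_of_forall_lt_or_compl_lt hc h ih.1 (hs _) ih.2
        (hsc _)⟩
  rw [measure_iUnion_eq_iSup_accumulate]
  exact iSup_le fun n => (hacc n).2.le

theorem exists_one_sub_le_measure_singleton [MeasurableSpace.CountablySeparated Y]
    (hc : 3 * c ≤ 1) (h : ∀ B, MeasurableSet B → ν B < c ∨ ν Bᶜ < c) :
    ∃ y, 1 - c ≤ ν {y} := by
  obtain ⟨S, hSm, hsep⟩ := exists_seq_separating Y MeasurableSet.empty univ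
  let E : ℕ → Set Y := fun n => if ν (S n) < c then S n else (S n)ᶜ
  have hEm : ∀ n, MeasurableSet (E n) := fun n => by
    unfold E; split_ifs
    exacts [hSm n, (hSm n).compl]
  have hEc : ∀ n, ν (E n) < c := fun n => by
    unfold E; split_ifs with hn
    exacts [hn, (h _ (hSm n)).resolve_left hn]
  have hsub : (⋃ n, E n)ᶜ.Subsingleton := fun x hx y hy =>
    hsep x trivial y trivial fun n => by
      simp only [compl_iUnion, mem_iInter] at hx hy
      have hxn := hx n
      have hyn := hy n
      unfold E at hxn hyn
      split_ifs at hxn hyn <;> simp_all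
  have := nonempty_of_isProbabilityMeasure ν
  obtain ⟨y, hy⟩ : ∃ y, (⋃ n, E n)ᶜ ⊆ {y} := by
    rcases hsub.eq_empty_or_singleton with h0 | ⟨y, hy⟩
    · exact ⟨Classical.arbitrary Y, h0 ▸ empty_subset _⟩
    · exact ⟨y, hy.le⟩
  refine ⟨y, le_trans ?_ (measure_mono hy)⟩
  rw [prob_compl_eq_one_sub (MeasurableSet.iUnion hEm)]
  exact tsub_le_tsub_left (measure_iUnion_le_of_forall_lt_or_compl_lt hc h hEm hEc) 1

theorem exists_measurableSet_le_measure_and_le_measure_compl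
    [MeasurableSpace.CountablySeparated Y] (hc : 3 * c ≤ 1) (h : ∀ y, ν {y} < 1 - c) :
    ∃ B, MeasurableSet B ∧ c ≤ ν B ∧ c ≤ ν Bᶜ := by
  by_contra! hB
  obtain ⟨y, hy⟩ := exists_one_sub_le_measure_singleton hc fun B hBm =>
    (lt_or_ge (ν B) c).imp_right (hB B hBm)
  exact (h y).not_ge hy

end AlmostDirac

theorem StronglyErgodic.exists_forall_measure_mul_measure_compl_lt {Γ X : Type*}
    [Countable Γ] [Nonempty Γ] [MeasurableSpace X] {μ : Measure X} {a : Γ → X → X}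
    (hse : StronglyErgodic μ a) {c : ℝ≥0∞} (hc : 0 < c) :
    ∃ δ > 0, ∃ F : Finset Γ, ∀ A, MeasurableSet A →
      (∀ g ∈ F, μ (symmDiff (a g '' A) A) ≤ δ) → μ A * μ Aᶜ < c := by
  classical
  by_contra! hcon
  obtain ⟨e, he⟩ := exists_surjective_nat Γ
  choose A hAm hAinv hAc using fun n : ℕ =>
    hcon (n : ℝ≥0∞)⁻¹ (by simp) ((Finset.range (n + 1)).image e)
  have hinv : ∀ g, Tendsto (fun n => μ (symmDiff (a g '' A n) (A n))) atTop (𝓝 0) := by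
    intro g
    obtain ⟨i, rfl⟩ := he g
    refine tendsto_of_tendsto_of_tendsto_of_le_of_le' tendsto_const_nhds
      ENNReal.tendsto_inv_nat_nhds_zero (Eventually.of_forall fun n => zero_le) ?_
    filter_upwards [eventually_ge_atTop i] with n hn
    exact hAinv n _ (Finset.mem_image_of_mem e (Finset.mem_range.2 (Nat.lt_succ_of_le hn)))
  exact hc.not_ge (ge_of_tendsto' (hse A hAm hinv) hAc)

theorem image_eq_preimage_inv {Γ X : Type*} [Group Γ] {a : Γ → X → X}
    (ha_one : ∀ x, a 1 x = x) (ha_mul : ∀ g h x, a (g * h) x = a g (a h x)) (g : Γ)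
    (s : Set X) : a g '' s = a g⁻¹ ⁻¹' s :=
  congrFun (image_eq_preimage_of_inverse (fun x => by rw [← ha_mul, inv_mul_cancel, ha_one])
    (fun x => by rw [← ha_mul, mul_inv_cancel, ha_one])) s

theorem measure_symmDiff_preimage_le {X Y : Type*} [MeasurableSpace X] [MeasurableSpace Y]
    {μ : Measure X} [IsProbabilityMeasure μ] {f : X → X} {ρ : X → Y} (hf : Measurable f)
    (hρ : Measurable ρ) {B : Set Y} (hB : MeasurableSet B) {δ : ℝ≥0∞}
    (h : 1 - δ ≤ μ {x | ρ (f x) = ρ x}) :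
    μ (symmDiff (f ⁻¹' (ρ ⁻¹' B)) (ρ ⁻¹' B)) ≤ δ := by
  set D := symmDiff (f ⁻¹' (ρ ⁻¹' B)) (ρ ⁻¹' B)
  have hD : MeasurableSet D := ((hρ hB).preimage hf).symmDiff (hρ hB)
  have hsub : {x | ρ (f x) = ρ x} ⊆ Dᶜ := fun x hx => by
    simp only [D, mem_ofPred_eq, mem_compl_iff, mem_symmDiff, mem_preimage] at hx ⊢
    rw [hx]
    tauto
  calc μ D = 1 - μ Dᶜ := by simpa only [compl_compl] using prob_compl_eq_one_sub hD.compl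
    _ ≤ 1 - (1 - δ) := tsub_le_tsub_left (h.trans (measure_mono hsub)) 1
    _ ≤ δ := tsub_tsub_le

theorem stronglyErgodic_almost_invariant_maps_almost_constant.{v}
    {Γ X : Type*} [Group Γ] [Countable Γ]
    [MeasurableSpace X] [StandardBorelSpace X]
    (μ : Measure X) [IsProbabilityMeasure μ]
    (a : Γ → X → X) (ha_one : ∀ x, a 1 x = x)
    (ha_mul : ∀ g h x, a (g * h) x = a g (a h x))
    (ha_meas : ∀ g, Measurable (a g))
    (ha_pres : ∀ g, MeasurePreserving (a g) μ μ)
    (hse : StronglyErgodic μ a)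
    (ε : ℝ≥0∞) (hε : 0 < ε) :
    ∃ (δ : ℝ≥0∞) (F : Finset Γ), 0 < δ ∧
      ∀ (Y : Type v) [MeasurableSpace Y] [StandardBorelSpace Y] (ρ : X → Y),
        Measurable ρ → (∀ g ∈ F, 1 - δ ≤ μ {x | ρ (a g x) = ρ x}) →
        ∃ y : Y, 1 - ε ≤ μ {x | ρ x = y} := by
  classical
  set c := min ε (1 / 3)
  have hc : 0 < c := lt_min hε (by norm_num)
  have hc3 : 3 * c ≤ 1 := (mul_le_mul_right (min_le_right _ _) 3).trans
    (ENNReal.mul_div_cancel (by norm_num) (by norm_num)).le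
  obtain ⟨δ, hδ, F, hF⟩ :=
    hse.exists_forall_measure_mul_measure_compl_lt (ENNReal.mul_pos hc.ne' hc.ne')
  refine ⟨δ, F.image (·⁻¹), hδ, fun Y _ _ ρ hρ hinv => ?_⟩
  by_contra! hne
  have := Measure.isProbabilityMeasure_map (μ := μ) hρ.aemeasurable
  obtain ⟨B, hBm, hB, hBc⟩ := exists_measurableSet_le_measure_and_le_measure_compl
    (ν := μ.map ρ) hc3 fun y => by
      rw [Measure.map_apply hρ (measurableSet_singleton y)]
      exact (hne y).trans_le (tsub_le_tsub_left (min_le_left _ _) 1)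
  have hsmall := hF (ρ ⁻¹' B) (hρ hBm) fun g hg => by
    rw [image_eq_preimage_inv ha_one ha_mul]
    exact measure_symmDiff_preimage_le (ha_meas _) hρ hBm
      (hinv _ (Finset.mem_image_of_mem _ hg))
  rw [Measure.map_apply hρ hBm] at hB
  rw [Measure.map_apply hρ hBm.compl, preimage_compl] at hBc
  exact hsmall.not_ge (mul_le_mul' hB hBc)

end IoanaPaper
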